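/- For positive definite matrices A and B on a finite-dimensional Hilbert space, ∫₀^∞ Tr[B {A > γB}] dγ = Tr[A], where {A > γB} denotes the projection onto the positive part of A - γB. -/

import Mathlib

/-! `f γ = Tr[(A - γB)₊]` has the subgradient `-Tr[B {A > γB}]` at every `γ`: since
`0 ≤ {X > 0} ≤ 1`, we have `Tr[Y {X > 0}] ≤ Tr[Y₊]`, and `Tr[X {X > 0}] = Tr[X₊]`. A real function
`f` with a subgradient `g` everywhere is convex, hence continuous, and `f' = g` wherever the
monotone `g` is continuous, i.e. off a countable set; so `∫_a^b g = f b - f a`. Since `A ≤ γB` for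
large `γ`, the integrand vanishes beyond some `M`, where also `f M = 0`, while `f 0 = Tr A`. -/

open MeasureTheory Matrix
open scoped ComplexOrder
noncomputable section

/-- The positive part `(X)₊` of a Hermitian matrix, via continuous functional calculus. -/
def mposPart {n : ℕ} (X : Matrix (Fin n) (Fin n) ℂ) : Matrix (Fin n) (Fin n) ℂ :=
  cfc (fun x : ℝ => max x 0) X

/-- The spectral projection of a Hermitian matrix onto its strictly positive part,
so that `projPos (A - γ • B)` is the projection `{A > γB}`. -/
def projPos {n : ℕ} (X : Matrix (Fin n) (Fin n) ℂ) : Matrix (Fin n) (Fin n) ℂ :=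
  cfc (fun x : ℝ => if 0 < x then (1:ℝ) else 0) X

/-- The spectral projection of a Hermitian matrix onto its nonnegative part,
so that `projNonneg (γ • B - A)` is the projection `{A ≤ γB}`. -/
def projNonneg {n : ℕ} (X : Matrix (Fin n) (Fin n) ℂ) : Matrix (Fin n) (Fin n) ℂ :=
  cfc (fun x : ℝ => if 0 ≤ x then (1:ℝ) else 0) X

/-- Matrix logarithm via functional calculus. -/
def mlog {n : ℕ} (X : Matrix (Fin n) (Fin n) ℂ) : Matrix (Fin n) (Fin n) ℂ :=
  cfc Real.log X

/-- Real matrix power via functional calculus (`Real.rpow`, so negative powers of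
positive semidefinite matrices are taken on the support). -/
def mpow {n : ℕ} (X : Matrix (Fin n) (Fin n) ℂ) (a : ℝ) : Matrix (Fin n) (Fin n) ℂ :=
  cfc (fun x : ℝ => x ^ a) X

open Set Filter Topology
open scoped MatrixOrder

theorem monotone_of_subgradient {f g : ℝ → ℝ} (h : ∀ x y, f x + (y - x) * g x ≤ f y) :
    Monotone g := by
  intro x y hxy
  rcases hxy.eq_or_lt with rfl | hlt
  · rfl
  have h₁ := h x y
  have h₂ := h y x
  nlinarith

theorem convexOn_univ_of_subgradient {f g : ℝ → ℝ} (h : ∀ x y, f x + (y - x) * g x ≤ f y) :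
    ConvexOn ℝ univ f := by
  refine ⟨convex_univ, fun x _ y _ a b ha hb hab => ?_⟩
  have hx := mul_le_mul_of_nonneg_left (h (a * x + b * y) x) ha
  have hy := mul_le_mul_of_nonneg_left (h (a * x + b * y) y) hb
  simp only [smul_eq_mul]
  linear_combination hx + hy - (f (a * x + b * y) - (a * x + b * y) * g (a * x + b * y)) * hab

theorem hasDerivAt_of_subgradient {f g : ℝ → ℝ} (h : ∀ x y, f x + (y - x) * g x ≤ f y)
    {x : ℝ} (hx : ContinuousAt g x) : HasDerivAt f (g x) x := by
  rw [hasDerivAt_iff_tendsto_slope]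
  have hlim : Tendsto g (𝓝[≠] x) (𝓝 (g x)) := hx.tendsto.mono_left nhdsWithin_le_nhds
  refine tendsto_of_tendsto_of_tendsto_of_le_of_le'
    (by simpa using (tendsto_const_nhds (x := g x)).min hlim)
    (by simpa using (tendsto_const_nhds (x := g x)).max hlim) ?_ ?_
  all_goals
    filter_upwards [self_mem_nhdsWithin] with y hy
    have h₁ := h x y
    have h₂ := h y x
    rw [slope_def_field]
    rcases lt_or_gt_of_ne hy with hyx | hxy
  · exact min_le_of_right_le (by rw [le_div_iff_of_neg (by linarith)]; linarith)
  · exact min_le_of_left_le (by rw [le_div_iff₀ (by linarith)]; linarith)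
  · exact le_max_of_le_left (by rw [div_le_iff_of_neg (by linarith)]; linarith)
  · exact le_max_of_le_right (by rw [div_le_iff₀ (by linarith)]; linarith)

theorem intervalIntegral.integral_eq_sub_of_subgradient {f g : ℝ → ℝ}
    (h : ∀ x y, f x + (y - x) * g x ≤ f y) (a b : ℝ) : ∫ x in a..b, g x = f b - f a :=
  integral_eq_of_hasDerivAt_off_countable f g
    (monotone_of_subgradient h).countable_not_continuousAt
    (((convexOn_univ_of_subgradient h).continuousOn isOpen_univ).mono (subset_univ _))
    (fun _ hx => hasDerivAt_of_subgradient h (not_not.mp hx.2))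
    (monotone_of_subgradient h).intervalIntegrable

namespace Matrix

section Order

variable {ι : Type*} [Fintype ι] [DecidableEq ι]

theorem PosSemidef.trace_mul_nonneg {S T : Matrix ι ι ℂ} (hS : S.PosSemidef) (hT : T.PosSemidef) :
    0 ≤ (S * T).trace := by
  obtain ⟨R, hR, rfl⟩ : ∃ R : Matrix ι ι ℂ, Rᴴ = R ∧ T = R * R :=
    ⟨CFC.sqrt T, (CFC.sqrt_nonneg T).isSelfAdjoint.star_eq,
      (CFC.sqrt_mul_sqrt_self T hT.nonneg).symm⟩
  rw [← mul_assoc, trace_mul_comm, ← mul_assoc]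
  simpa [hR] using (hS.mul_mul_conjTranspose_same R).trace_nonneg

theorem trace_mul_le_trace_mul_of_nonneg_right {S T P : Matrix ι ι ℂ} (hST : S ≤ T)
    (hP : 0 ≤ P) :
    (S * P).trace ≤ (T * P).trace := by
  rw [← sub_nonneg, ← trace_sub, ← sub_mul]
  exact hST.trace_mul_nonneg hP.posSemidef

theorem trace_mul_le_trace_mul_of_nonneg_left {S T P : Matrix ι ι ℂ} (hST : S ≤ T)
    (hP : 0 ≤ P) :
    (P * S).trace ≤ (P * T).trace := by
  rw [trace_mul_comm P, trace_mul_comm P]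
  exact trace_mul_le_trace_mul_of_nonneg_right hST hP

theorem eventually_sub_smul_nonpos {A B : Matrix ι ι ℂ} (hA : A.IsHermitian) (hB : B.PosDef) :
    ∀ᶠ γ : ℝ in atTop, A - γ • B ≤ 0 := by
  nontriviality Matrix ι ι ℂ
  obtain ⟨r, hr⟩ := (Matrix.finite_real_spectrum (A := A)).bddAbove
  have hAr : A ≤ algebraMap ℝ _ r := le_algebraMap_of_spectrum_le hr hA.isSelfAdjoint
  obtain ⟨c, hc, hcB⟩ : ∃ c > 0, algebraMap ℝ _ c ≤ B :=
    (CFC.exists_pos_algebraMap_le_iff hB.isHermitian.isSelfAdjoint).2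
      fun _ ↦ (isStrictlyPositive_iff_posDef.2 hB).spectrum_pos
  filter_upwards [eventually_ge_atTop (r / c), eventually_ge_atTop 0] with γ hγ hγ₀
  rw [le_iff] at hAr hcB ⊢
  have hrγ : 0 ≤ γ * c - r := by rw [div_le_iff₀ hc] at hγ; linarith
  convert (hcB.smul hγ₀).add (hAr.add (PosSemidef.one.smul hrγ)) using 1
  simp only [Algebra.algebraMap_eq_smul_one]
  module

theorem spectrum_nonpos_of_nonpos {X : Matrix ι ι ℂ} (hX : X ≤ 0) {x : ℝ}
    (hx : x ∈ spectrum ℝ X) : x ≤ 0 := by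
  have hX' : IsSelfAdjoint X := by simpa using (neg_nonneg.2 hX).isSelfAdjoint.neg
  exact (le_algebraMap_iff_spectrum_le hX').1 (by simpa using hX) x hx

end Order

variable {n : ℕ} {X Y : Matrix (Fin n) (Fin n) ℂ}

theorem projPos_nonneg (X : Matrix (Fin n) (Fin n) ℂ) : 0 ≤ projPos X :=
  cfc_nonneg fun x _ ↦ by positivity

theorem projPos_le_one (X : Matrix (Fin n) (Fin n) ℂ) : projPos X ≤ 1 :=
  cfc_le_one _ _ fun x _ ↦ by split_ifs <;> norm_num

theorem mposPart_nonneg (X : Matrix (Fin n) (Fin n) ℂ) : 0 ≤ mposPart X :=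
  cfc_nonneg fun x _ ↦ le_max_right x 0

theorem le_mposPart (hX : X.IsHermitian) : X ≤ mposPart X := by
  conv_lhs => rw [← cfc_id' ℝ X hX.isSelfAdjoint]
  exact cfc_mono fun x _ ↦ le_max_left x 0

theorem mul_projPos_self (hX : X.IsHermitian) : X * projPos X = mposPart X := by
  rw [projPos, mposPart]
  nth_rw 1 [← cfc_id' ℝ X hX.isSelfAdjoint]
  rw [← cfc_mul (hf := finite_real_spectrum.continuousOn _)
    (hg := finite_real_spectrum.continuousOn _)]
  congr 1 with x
  split_ifs with hx
  · simp [hx.le]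
  · simp [not_lt.mp hx]

theorem mposPart_eq_self (hX : 0 ≤ X) : mposPart X = X := by
  conv_rhs => rw [← cfc_id' ℝ X hX.isSelfAdjoint]
  exact cfc_congr fun x hx ↦ max_eq_left (spectrum_nonneg_of_nonneg hX hx)

theorem projPos_eq_zero_of_nonpos (hX : X ≤ 0) : projPos X = 0 := by
  rw [projPos,
    cfc_congr (g := fun _ ↦ 0) fun x hx ↦ if_neg (spectrum_nonpos_of_nonpos hX hx).not_gt]
  exact cfc_const_zero ℝ X

theorem mposPart_eq_zero_of_nonpos (hX : X ≤ 0) : mposPart X = 0 := by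
  rw [mposPart,
    cfc_congr (g := fun _ ↦ 0) fun x hx ↦ max_eq_right (spectrum_nonpos_of_nonpos hX hx)]
  exact cfc_const_zero ℝ X

theorem trace_mul_le_trace_mposPart {P : Matrix (Fin n) (Fin n) ℂ} (hX : X.IsHermitian)
    (hP₀ : 0 ≤ P) (hP₁ : P ≤ 1) : (X * P).trace ≤ (mposPart X).trace :=
  calc (X * P).trace ≤ (mposPart X * P).trace :=
        trace_mul_le_trace_mul_of_nonneg_right (le_mposPart hX) hP₀
    _ ≤ (mposPart X * 1).trace := trace_mul_le_trace_mul_of_nonneg_left hP₁ (mposPart_nonneg X)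
    _ = (mposPart X).trace := by rw [mul_one]

theorem trace_mposPart_add_le (hX : X.IsHermitian) (hY : Y.IsHermitian) :
    (mposPart X).trace + ((Y - X) * projPos X).trace ≤ (mposPart Y).trace := by
  rw [sub_mul, trace_sub, ← mul_projPos_self hX, add_sub_cancel]
  exact trace_mul_le_trace_mposPart hY (projPos_nonneg X) (projPos_le_one X)

theorem re_trace_mposPart_sub_smul_add_le {A B : Matrix (Fin n) (Fin n) ℂ} (hA : A.IsHermitian)
    (hB : B.IsHermitian) (γ₁ γ₂ : ℝ) :
    (mposPart (A - γ₁ • B)).trace.re + (γ₂ - γ₁) * -(B * projPos (A - γ₁ • B)).trace.re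
      ≤ (mposPart (A - γ₂ • B)).trace.re := by
  have h := (Complex.le_def.1 <| trace_mposPart_add_le (hA.sub (hB.smul (.all γ₁)))
    (hA.sub (hB.smul (.all γ₂)))).1
  rw [show A - γ₂ • B - (A - γ₁ • B) = (γ₁ - γ₂) • B by module, smul_mul_assoc, trace_smul,
    Complex.add_re, Complex.real_smul, Complex.re_ofReal_mul] at h
  linarith

end Matrix

/-- `∫₀^∞ Tr[B {A > γB}] dγ = Tr[A]` for positive definite `A`, `B`. -/
theorem integral_trace_projPos_eq_trace {n : ℕ} (A B : Matrix (Fin n) (Fin n) ℂ)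
    (hA : A.PosDef) (hB : B.PosDef) :
    ∫ γ in Set.Ioi (0:ℝ), (Matrix.trace (B * projPos (A - γ • B))).re
      = (Matrix.trace A).re := by
  obtain ⟨M, hM⟩ :=
    ((eventually_sub_smul_nonpos hA.1 hB).and (eventually_ge_atTop 0)).exists_forall_of_atTop
  have hvanish : ∀ γ ∈ Ioi (0 : ℝ) \ Ioc 0 M, (B * projPos (A - γ • B)).trace.re = 0 :=
    fun γ hγ ↦ by
      rw [projPos_eq_zero_of_nonpos (hM γ (not_le.1 (not_and.1 hγ.2 hγ.1)).le).1]
      simp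
  calc ∫ γ in Ioi (0 : ℝ), (B * projPos (A - γ • B)).trace.re
      = ∫ γ in 0..M, (B * projPos (A - γ • B)).trace.re := by
        rw [intervalIntegral.integral_of_le (hM M le_rfl).2,
          setIntegral_eq_of_subset_of_forall_sdiff_eq_zero measurableSet_Ioi Ioc_subset_Ioi_self
            hvanish]
    _ = (mposPart (A - (0 : ℝ) • B)).trace.re - (mposPart (A - M • B)).trace.re := by
        rw [← neg_sub, ← intervalIntegral.integral_eq_sub_of_subgradient
          (re_trace_mposPart_sub_smul_add_le hA.1 hB.1), intervalIntegral.integral_neg, neg_neg]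
    _ = A.trace.re := by
        rw [zero_smul, sub_zero, mposPart_eq_self hA.posSemidef.nonneg,
          mposPart_eq_zero_of_nonpos (hM M le_rfl).1, trace_zero, Complex.zero_re, sub_zero]
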